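/- Let t > 0, N ≥ 1, let x = (x₁,…,x_N) ∈ ℝ^N, let ν = (ν₁,…,ν_N) ∈ ℝ^N have distinct entries, and let ξ = (ξ₁,…,ξ_N) ∈ ℝ^N with ξ₁ < ⋯ < ξ_N. Then the limit as ε → 0⁺ of exp(−t|ν|²/2) · (det_{1 ≤ j,k ≤ N}[e^{ν_j x_k}] / det_{1 ≤ j,k ≤ N}[e^{ν_j ε ξ_k}]) · det_{1 ≤ j,k ≤ N}[p(t, x_j | ε ξ_k)] equals t^{−N} · (h_N(x/t)/h_N(ν)) · det_{1 ≤ j,k ≤ N}[p(1/t, x_j/t | ν_k)]. (This is the reciprocal-time relation: the transition density of the noncolliding Brownian motion with drift ν started from N particles at the origin, evaluated at x at time t, equals the reciprocal-time transform of the driftless noncolliding Brownian motion density started from ν.) -/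

import Mathlib

open Filter Topology Finset

/-- Heat kernel: transition density of one-dimensional standard Brownian motion. -/
noncomputable def heatKernel (t y x : ℝ) : ℝ :=
  Real.exp (-(x - y) ^ 2 / (2 * t)) / Real.sqrt (2 * Real.pi * t)

/-- Vandermonde product `h_N(v) = ∏_{j<ℓ}(v_ℓ − v_j)`. -/
def vdm {N : ℕ} (v : Fin N → ℝ) : ℝ :=
  ∏ p ∈ Finset.univ.filter (fun p : Fin N × Fin N => p.1 < p.2), (v p.2 - v p.1)

/-!
Completing the square factors each heat-kernel determinant into Gaussian row and column weights
times `det [exp (y_j z_k / t)]`. On the left the column weights tend to `1`; on the right the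
weights produce exactly `t ^ N`, the row weights of the left side and `exp (-t |ν|² / 2)`, and the
remaining determinant is `det [exp (ν_j x_k)]`. So everything reduces to
`det [exp (a_j ε ξ_k)] / det [exp (ν_j ε ξ_k)] → h_N(a) / h_N(ν)` with `a = x / t`.

Expanding the exponentials, `det [exp (a_j ε ξ_k)] = Σₙ εⁿ / n! · Dₙ(ξ, a)` with
`Dₙ(ξ, a) = Σ_σ sgn σ ⟨a ∘ σ, ξ⟩ⁿ` (`alternantPowerSum`). Multiplying out the power writes
`Dₙ(ξ, a)` as a combination of determinants `det [a_j ^ μ_k]` with `Σ μ_k = n`; these vanish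
unless the `μ_k` are distinct, which forces `n ≥ m := N.choose 2`, with equality only when
`{μ_k} = {0, …, N-1}`. Hence `Dₙ = 0` for `n < m` and `Dₘ(ξ, a) = c(ξ) h_N(a)`. Since `Dₘ` is
symmetric in `(ξ, a)`, the constant is fixed by the case `ξ = (0, …, N-1)`, where the matrix is
the Vandermonde matrix of the `exp (ε a_j)`; this gives
`Dₘ(ξ, a) = m! h_N(ξ) h_N(a) / h_N(0, …, N-1)`, nonzero for distinct `ξ` and `a`.
-/

open Matrix Equiv Function

theorem Nat.succ_choose_two (n : ℕ) : (n + 1).choose 2 = n.choose 2 + n := by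
  simp [Nat.choose_succ_succ', add_comm]

theorem Fin.sum_card_Ioi (N : ℕ) : ∑ i : Fin N, #(Ioi i) = N.choose 2 := by
  simp_rw [Fin.card_Ioi]
  rw [Fin.sum_univ_eq_sum_range (fun i => N - 1 - i), sum_range_reflect (fun i => i),
    sum_range_id, Nat.choose_two_right]

theorem Finset.choose_two_card_le_sum (s : Finset ℕ) : (#s).choose 2 ≤ ∑ x ∈ s, x := by
  induction s using Finset.induction_on_max with
  | empty => simp
  | insert a t hlt ih =>
    have hat : a ∉ t := fun h => (hlt a h).false
    have hcard : #t ≤ a := by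
      simpa using Finset.card_le_card (fun x hx => Finset.mem_range.2 (hlt x hx))
    rw [Finset.card_insert_of_notMem hat, Finset.sum_insert hat, Nat.succ_choose_two]
    omega

theorem Finset.eq_range_card_of_sum_eq_choose_two {s : Finset ℕ}
    (hs : ∑ x ∈ s, x = (#s).choose 2) : s = range #s := by
  induction s using Finset.induction_on_max with
  | empty => simp
  | insert a t hlt ih =>
    have hat : a ∉ t := fun h => (hlt a h).false
    have hcard : #t ≤ a := by
      simpa using Finset.card_le_card (fun x hx => Finset.mem_range.2 (hlt x hx))
    have ht := Finset.choose_two_card_le_sum t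
    rw [Finset.card_insert_of_notMem hat, Finset.sum_insert hat, Nat.succ_choose_two] at hs
    rw [Finset.card_insert_of_notMem hat, ih (by omega), card_range, range_add_one,
      show a = #t by omega]

theorem choose_two_le_sum_of_injective {N : ℕ} {μ : Fin N → ℕ} (hμ : Injective μ) :
    N.choose 2 ≤ ∑ k, μ k := by
  simpa [card_image_of_injective _ hμ, sum_image hμ.injOn] using
    Finset.choose_two_card_le_sum (univ.image μ)

theorem lt_of_sum_eq_choose_two {N : ℕ} {μ : Fin N → ℕ} (hμ : Injective μ)
    (hsum : ∑ k, μ k = N.choose 2) (k : Fin N) : μ k < N := by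
  have hrange := Finset.eq_range_card_of_sum_eq_choose_two (s := univ.image μ)
    (by simpa [card_image_of_injective _ hμ, sum_image hμ.injOn] using hsum)
  have hk : μ k ∈ univ.image μ := mem_image_of_mem μ (mem_univ k)
  rw [hrange, card_image_of_injective _ hμ] at hk
  simpa using hk

section Alternant

variable {R : Type*} [CommRing R] {N : ℕ}

def alternantPowerSum (ξ a : Fin N → R) (n : ℕ) : R :=
  ∑ σ : Perm (Fin N), (Perm.sign σ : R) * (∑ k, a (σ k) * ξ k) ^ n

theorem alternantPowerSum_comm (ξ a : Fin N → R) (n : ℕ) :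
    alternantPowerSum ξ a n = alternantPowerSum a ξ n := by
  refine Fintype.sum_equiv (Equiv.inv (Perm (Fin N))) _ _ fun σ => ?_
  rw [Equiv.inv_apply, Perm.sign_inv, ← Equiv.sum_comp σ (fun k => ξ (σ⁻¹ k) * a k)]
  simp [mul_comm]

theorem alternantPowerSum_eq_sum_det (ξ a : Fin N → R) (n : ℕ) :
    alternantPowerSum ξ a n = ∑ f : Fin n → Fin N,
      (∏ i, ξ (f i)) * det (of fun j k => a j ^ #{i | f i = k}) := by
  have hpow (σ : Perm (Fin N)) : (∑ k, a (σ k) * ξ k) ^ n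
      = ∑ f : Fin n → Fin N, (∏ i, ξ (f i)) * ∏ k, a (σ k) ^ #{i | f i = k} := by
    refine (Fintype.sum_pow _ n).trans (Finset.sum_congr rfl fun f _ => ?_)
    rw [Finset.prod_mul_distrib, mul_comm, ← Finset.prod_fiberwise' univ f (fun k => a (σ k))]
    simp
  simp_rw [alternantPowerSum, hpow, Finset.mul_sum, det_apply', Finset.mul_sum]
  rw [Finset.sum_comm]
  refine Finset.sum_congr rfl fun f _ => Finset.sum_congr rfl fun σ _ => ?_
  simp only [of_apply]
  ring

theorem det_of_comp_eq_zero_of_not_injective {α : Type*} {μ : Fin N → α}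
    (hμ : ¬ Injective μ) (F : Fin N → α → R) : det (of fun j k => F j (μ k)) = 0 := by
  obtain ⟨k₁, k₂, hk, hne⟩ := not_injective_iff.mp hμ
  exact det_zero_of_column_eq hne fun j => by simp [hk]

theorem of_pow_eq_vandermonde_mul {μ : Fin N → ℕ} (hμ : ∀ k, μ k < N) (a : Fin N → R) :
    of (fun j k => a j ^ μ k)
      = vandermonde a * of (fun (l : Fin N) k => if (l : ℕ) = μ k then (1 : R) else 0) := by
  ext j k
  rw [mul_apply, Fintype.sum_eq_single ⟨μ k, hμ k⟩ fun l hl => by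
    simp [Fin.ext_iff] at hl; simp [hl]]
  simp [vandermonde_apply]

theorem sum_card_fiber {n : ℕ} (f : Fin n → Fin N) : ∑ k, #{i | f i = k} = n := by
  simpa using (Finset.card_eq_sum_card_fiberwise fun i (_ : i ∈ univ) => mem_univ (f i)).symm

theorem alternantPowerSum_eq_zero_of_lt (ξ a : Fin N → R) {n : ℕ} (hn : n < N.choose 2) :
    alternantPowerSum ξ a n = 0 := by
  rw [alternantPowerSum_eq_sum_det]
  refine Finset.sum_eq_zero fun f _ => ?_
  have hμ : ¬ Injective fun k => #{i | f i = k} := fun hμ =>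
    (choose_two_le_sum_of_injective hμ).not_gt (by rwa [sum_card_fiber])
  rw [det_of_comp_eq_zero_of_not_injective hμ fun j m => a j ^ m, mul_zero]

theorem exists_alternantPowerSum_choose_two_eq_mul_det (ξ : Fin N → R) :
    ∃ c : R, ∀ a, alternantPowerSum ξ a (N.choose 2) = c * det (vandermonde a) := by
  refine ⟨∑ f : Fin (N.choose 2) → Fin N, (∏ i, ξ (f i)) *
    det (of fun (l : Fin N) k => if (l : ℕ) = #{i | f i = k} then (1 : R) else 0), fun a => ?_⟩
  rw [alternantPowerSum_eq_sum_det, Finset.sum_mul]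
  refine Finset.sum_congr rfl fun f _ => ?_
  by_cases hμ : Injective fun k => #{i | f i = k}
  · have hlt := lt_of_sum_eq_choose_two hμ (sum_card_fiber f)
    rw [of_pow_eq_vandermonde_mul hlt, det_mul]
    ring
  · rw [det_of_comp_eq_zero_of_not_injective hμ fun j m => a j ^ m,
      det_of_comp_eq_zero_of_not_injective hμ fun (l : Fin N) m => if (l : ℕ) = m then 1 else 0]
    ring

end Alternant

section ExpDeterminant

open Real Asymptotics Nat

variable {N : ℕ}

theorem det_exp_mul_eq_sum (ξ a : Fin N → ℝ) (ε : ℝ) :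
    det (of fun j k => exp (a j * (ε * ξ k)))
      = ∑ σ : Perm (Fin N), (Perm.sign σ : ℝ) * exp (ε * ∑ k, a (σ k) * ξ k) := by
  rw [det_apply']
  refine Finset.sum_congr rfl fun σ _ => ?_
  rw [Finset.mul_sum, exp_sum]
  simp only [of_apply, mul_left_comm]

theorem isLittleO_det_exp_sub (ξ a : Fin N → ℝ) :
    (fun ε => det (of fun j k => exp (a j * (ε * ξ k)))
      - ε ^ N.choose 2 / (N.choose 2)! * alternantPowerSum ξ a (N.choose 2))
      =o[𝓝 0] (· ^ N.choose 2) := by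
  set m := N.choose 2
  have hexp (c : ℝ) : (fun ε => exp (ε * c) - ∑ i ∈ range (m + 1), (ε * c) ^ i / i !)
      =o[𝓝 0] (· ^ m) := by
    refine ((exp_sub_sum_range_succ_isLittleO_pow m).comp_tendsto
      ((continuous_mul_const c).tendsto' 0 0 (zero_mul c))).trans_isBigO ?_
    simpa [Function.comp_def, mul_pow, mul_comm] using
      (isBigO_refl (· ^ m) (𝓝 (0 : ℝ))).const_mul_left (c ^ m)
  have htaylor (ε : ℝ) : ∑ σ : Perm (Fin N), (Perm.sign σ : ℝ) *
      ∑ i ∈ range (m + 1), (ε * ∑ k, a (σ k) * ξ k) ^ i / i !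
      = ε ^ m / m ! * alternantPowerSum ξ a m := by
    calc _ = ∑ i ∈ range (m + 1), ε ^ i / i ! * alternantPowerSum ξ a i := by
          simp only [alternantPowerSum, Finset.mul_sum (range _),
            Finset.mul_sum (univ : Finset (Perm (Fin N)))]
          rw [Finset.sum_comm]
          exact Finset.sum_congr rfl fun i _ => Finset.sum_congr rfl fun σ _ => by ring
      _ = _ := by
          rw [Finset.sum_range_succ, Finset.sum_eq_zero fun i hi => by
            rw [alternantPowerSum_eq_zero_of_lt ξ a (mem_range.mp hi), mul_zero], zero_add]
  refine (IsLittleO.fun_sum fun (σ : Perm (Fin N)) (_ : σ ∈ univ) =>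
    (hexp (∑ k, a (σ k) * ξ k)).const_mul_left (Perm.sign σ : ℝ)).congr_left fun ε => ?_
  rw [det_exp_mul_eq_sum, ← htaylor, ← Finset.sum_sub_distrib]
  simp only [mul_sub]

theorem tendsto_det_exp_div_pow (ξ a : Fin N → ℝ) :
    Tendsto (fun ε => det (of fun j k => exp (a j * (ε * ξ k))) / ε ^ N.choose 2) (𝓝[≠] 0)
      (𝓝 (alternantPowerSum ξ a (N.choose 2) / (N.choose 2)!)) := by
  rw [← tendsto_sub_nhds_zero_iff]
  refine ((isLittleO_det_exp_sub ξ a).tendsto_div_nhds_zero.mono_left nhdsWithin_le_nhds).congr'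
    (eventually_nhdsWithin_of_forall fun ε (hε : ε ≠ 0) => ?_)
  dsimp only
  rw [sub_div]
  congr 1
  field_simp

theorem tendsto_exp_mul_sub_exp_mul_div (c d : ℝ) :
    Tendsto (fun ε => (exp (ε * c) - exp (ε * d)) / ε) (𝓝[≠] 0) (𝓝 (c - d)) := by
  have hderiv : HasDerivAt (fun ε => exp (ε * c) - exp (ε * d)) (c - d) 0 := by
    simpa using ((hasDerivAt_mul_const c).exp.fun_sub (hasDerivAt_mul_const d).exp :
      HasDerivAt _ _ (0 : ℝ))
  simpa [div_eq_inv_mul] using hderiv.tendsto_slope_zero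

theorem tendsto_det_exp_natCast_div_pow (a : Fin N → ℝ) :
    Tendsto (fun ε => det (of fun j k : Fin N => exp (a j * (ε * (k : ℕ)))) / ε ^ N.choose 2)
      (𝓝[≠] 0) (𝓝 (det (vandermonde a))) := by
  have hdet (ε : ℝ) : det (of fun j k : Fin N => exp (a j * (ε * (k : ℕ))))
      = ∏ i, ∏ j ∈ Ioi i, (exp (ε * a j) - exp (ε * a i)) := by
    rw [← det_vandermonde]
    congr 1
    ext j k
    rw [of_apply, vandermonde_apply, ← exp_nat_mul]
    ring_nf
  have hpow (ε : ℝ) : ε ^ N.choose 2 = ∏ i : Fin N, ∏ _j ∈ Ioi i, ε := by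
    simp_rw [prod_const, prod_pow_eq_pow_sum, Fin.sum_card_Ioi]
  simp_rw [hdet, hpow, ← prod_div_distrib, det_vandermonde]
  exact tendsto_finsetProd _ fun i _ => tendsto_finsetProd _ fun j _ =>
    tendsto_exp_mul_sub_exp_mul_div (a j) (a i)

theorem det_vandermonde_natCast_ne_zero :
    det (vandermonde fun k : Fin N => ((k : ℕ) : ℝ)) ≠ 0 :=
  det_vandermonde_ne_zero_iff.mpr (Nat.cast_injective.comp Fin.val_injective)

theorem alternantPowerSum_natCast (a : Fin N → ℝ) :
    alternantPowerSum (fun k => ((k : ℕ) : ℝ)) a (N.choose 2)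
      = (N.choose 2)! * det (vandermonde a) := by
  have h := tendsto_nhds_unique (tendsto_det_exp_div_pow (fun k => ((k : ℕ) : ℝ)) a)
    (tendsto_det_exp_natCast_div_pow a)
  rw [div_eq_iff (by positivity)] at h
  rw [h, mul_comm]

theorem alternantPowerSum_choose_two (ξ a : Fin N → ℝ) :
    alternantPowerSum ξ a (N.choose 2) = (N.choose 2)! * det (vandermonde ξ)
      * det (vandermonde a) / det (vandermonde fun k : Fin N => ((k : ℕ) : ℝ)) := by
  obtain ⟨c, hc⟩ := exists_alternantPowerSum_choose_two_eq_mul_det ξ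
  have hcι : c * det (vandermonde fun k : Fin N => ((k : ℕ) : ℝ))
      = (N.choose 2)! * det (vandermonde ξ) := by
    rw [← hc, alternantPowerSum_comm, alternantPowerSum_natCast]
  rw [hc, eq_div_iff det_vandermonde_natCast_ne_zero, ← hcι]
  ring

theorem tendsto_det_exp_div_pow_vandermonde (ξ a : Fin N → ℝ) :
    Tendsto (fun ε => det (of fun j k => exp (a j * (ε * ξ k))) / ε ^ N.choose 2) (𝓝[≠] 0)
      (𝓝 (det (vandermonde ξ) * det (vandermonde a)
        / det (vandermonde fun k : Fin N => ((k : ℕ) : ℝ)))) := by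
  convert tendsto_det_exp_div_pow ξ a using 2
  rw [alternantPowerSum_choose_two]
  field_simp

theorem tendsto_det_exp_div_det_exp {ξ ν : Fin N → ℝ} (hξ : Injective ξ)
    (hν : Injective ν) (a : Fin N → ℝ) :
    Tendsto (fun ε => det (of fun j k => exp (a j * (ε * ξ k)))
        / det (of fun j k => exp (ν j * (ε * ξ k))))
      (𝓝[≠] 0) (𝓝 (det (vandermonde a) / det (vandermonde ν))) := by
  have hι := det_vandermonde_natCast_ne_zero (N := N)
  have hξ' := det_vandermonde_ne_zero_iff.mpr hξ
  have hν' := det_vandermonde_ne_zero_iff.mpr hν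
  have hlim := (tendsto_det_exp_div_pow_vandermonde ξ a).div
    (tendsto_det_exp_div_pow_vandermonde ξ ν) (by positivity)
  rw [div_div_div_cancel_right₀ hι, mul_div_mul_left _ _ hξ'] at hlim
  exact hlim.congr' (eventually_nhdsWithin_of_forall fun ε hε =>
    div_div_div_cancel_right₀ (pow_ne_zero _ hε) _ _)

end ExpDeterminant

theorem vdm_eq_det_vandermonde {N : ℕ} (v : Fin N → ℝ) : vdm v = det (vandermonde v) := by
  rw [det_vandermonde, vdm, prod_filter, Fintype.prod_prod_type]
  simp [← prod_filter, filter_lt_eq_Ioi]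

theorem det_of_mul_mul {n R : Type*} [Fintype n] [DecidableEq n] [CommRing R] (r s : n → R)
    (E : n → n → R) :
    det (of fun j k => r j * s k * E j k) = (∏ j, r j) * (∏ k, s k) * det (of E) := by
  calc det (of fun j k => r j * s k * E j k)
      = det (of fun j k => r j * (of fun j k => s k * of E j k) j k) := by simp [mul_assoc]
    _ = (∏ j, r j) * det (of fun j k => s k * of E j k) := det_mul_column _ _
    _ = _ := by rw [det_mul_row, mul_assoc]

section HeatKernel

open Real

theorem heatKernel_eq_mul (t y x : ℝ) :
    heatKernel t y x = heatKernel t y 0 * exp (-x ^ 2 / (2 * t)) * exp (y / t * x) := by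
  simp only [heatKernel, div_mul_eq_mul_div, ← exp_add]
  congr 2
  ring

theorem heatKernel_one_div {t : ℝ} (ht : 0 < t) (y x : ℝ) :
    heatKernel (1 / t) (y / t) x = t * heatKernel t y 0 * exp (-t * x ^ 2 / 2) * exp (y * x) := by
  have hsqrt : √(2 * π * (1 / t)) = √(2 * π * t) / t := by
    rw [show 2 * π * (1 / t) = 2 * π * t / t ^ 2 by field_simp, sqrt_div' _ (sq_nonneg t),
      sqrt_sq ht.le]
  have hexponent : -(x - y / t) ^ 2 / (2 * (1 / t))
      = -(0 - y) ^ 2 / (2 * t) + -t * x ^ 2 / 2 + y * x := by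
    field_simp
    ring
  rw [heatKernel, heatKernel, hsqrt, hexponent, exp_add, exp_add]
  field_simp

theorem det_heatKernel_one_div {N : ℕ} {t : ℝ} (ht : 0 < t) (y ν : Fin N → ℝ) :
    det (of fun j k => heatKernel (1 / t) (y j / t) (ν k))
      = t ^ N * (∏ j, heatKernel t (y j) 0) * exp (-t * (∑ k, ν k ^ 2) / 2)
        * det (of fun j k => exp (ν j * y k)) := by
  simp_rw [heatKernel_one_div ht, det_of_mul_mul, prod_mul_distrib, prod_const, card_fin,
    ← exp_sum, ← sum_div, ← mul_sum]
  congr 1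
  rw [← det_transpose]
  congr 1
  ext j k
  simp [mul_comm]

end HeatKernel

theorem reciprocal_time_relation_general (N : ℕ) (t : ℝ) (ht : 0 < t)
    (x ν ξ : Fin N → ℝ) (hν : Function.Injective ν)
    (hξ : ∀ j k : Fin N, j < k → ξ j < ξ k) :
    Tendsto
      (fun ε : ℝ =>
        Real.exp (-t * (∑ j : Fin N, ν j ^ 2) / 2) *
          (Matrix.det (Matrix.of fun j k : Fin N => Real.exp (ν j * x k)) /
            Matrix.det (Matrix.of fun j k : Fin N => Real.exp (ν j * (ε * ξ k)))) *
          Matrix.det (Matrix.of fun j k : Fin N => heatKernel t (x j) (ε * ξ k)))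
      (𝓝[>] 0)
      (𝓝 ((t : ℝ) ^ (-(N : ℤ)) * (vdm (fun j => x j / t) / vdm ν) *
        Matrix.det (Matrix.of fun j k : Fin N => heatKernel (1 / t) (x j / t) (ν k)))) := by
  have hgauss : Tendsto (fun ε : ℝ => ∏ k, Real.exp (-(ε * ξ k) ^ 2 / (2 * t))) (𝓝[>] 0)
      (𝓝 1) := by
    have hcont : Continuous fun ε : ℝ => ∏ k, Real.exp (-(ε * ξ k) ^ 2 / (2 * t)) := by
      fun_prop
    simpa using (hcont.tendsto 0).mono_left nhdsWithin_le_nhds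
  have hratio := (tendsto_det_exp_div_det_exp (StrictMono.injective hξ) hν
    fun j => x j / t).mono_left (nhdsGT_le_nhdsNE 0)
  simp only [heatKernel_eq_mul t (x _) (_ * _), det_of_mul_mul]
  convert (hgauss.mul hratio).const_mul (Real.exp (-t * (∑ j, ν j ^ 2) / 2)
    * det (of fun j k => Real.exp (ν j * x k)) * ∏ j, heatKernel t (x j) 0) using 1
  · funext ε
    ring
  · rw [det_heatKernel_one_div ht, vdm_eq_det_vandermonde, vdm_eq_det_vandermonde,
      _root_.zpow_neg, zpow_natCast]
    field_simp

/-- Reciprocal-time relation: the transition density of the noncolliding Brownian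
motion with drift `ν` started from `N` particles at the origin equals the
reciprocal-time transform of the driftless noncolliding Brownian motion density
started from `ν`. -/
theorem reciprocal_time_relation (N : ℕ) (hN : 1 ≤ N) (t : ℝ) (ht : 0 < t)
    (x ν ξ : Fin N → ℝ) (hν : Function.Injective ν)
    (hξ : ∀ j k : Fin N, j < k → ξ j < ξ k) :
    Tendsto
      (fun ε : ℝ =>
        Real.exp (-t * (∑ j : Fin N, ν j ^ 2) / 2) *
          (Matrix.det (Matrix.of fun j k : Fin N => Real.exp (ν j * x k)) /
            Matrix.det (Matrix.of fun j k : Fin N => Real.exp (ν j * (ε * ξ k)))) *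
          Matrix.det (Matrix.of fun j k : Fin N => heatKernel t (x j) (ε * ξ k)))
      (𝓝[>] 0)
      (𝓝 ((t : ℝ) ^ (-(N : ℤ)) * (vdm (fun j => x j / t) / vdm ν) *
        Matrix.det (Matrix.of fun j k : Fin N => heatKernel (1 / t) (x j / t) (ν k)))) :=
  reciprocal_time_relation_general N t ht x ν ξ hν hξ
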